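/- Let F(x,y) = ax + by + (higher order terms) ∈ ℂ_p[[x,y]] be a convergent power series on the polydisk D = {|x| ≤ δ, |y| ≤ δ} with F(0,0) = 0 and b ≠ 0. Then there exist δ' with 0 < δ' ≤ δ and a power series g(x) ∈ ℂ_p[[x]] convergent for |x| ≤ δ', with g(0) = 0, such that for all (x,y) with |x| ≤ δ' and |y| ≤ δ', F(x,y) = 0 if and only if y = g(x). -/

import Mathlib

/-!
Because `b = ∂F/∂y (0, 0) ≠ 0`, the equation `F(X, g(X)) = 0` determines a formal solution `g`
coefficient by coefficient: the coefficient of `X ^ n` is `b g_n` plus terms involving only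
`g_1, …, g_{n-1}`. In the ultrametric world `‖b g_n‖` is at most the largest of those terms, which
gives inductively a geometric bound `‖g_n‖ ≤ μ ρ ^ n`. Hence `g` converges on a small disk, and
regrouping the absolutely convergent series `∑ a_{ij} x ^ i g(x) ^ j` by powers of `x` shows
`F(x, g(x)) = 0`. Uniqueness is a contraction estimate: on a small polydisk
`F(x, y₁) - F(x, y₂) = b (y₁ - y₂) + R` with `‖R‖ ≤ ‖b‖ ‖y₁ - y₂‖ / 2`.
-/

/-- Evaluation of the two-variable power series with coefficients `a` at `(x, y)`. -/
noncomputable def evalPS2 {K : Type*} [NormedField K] (a : ℕ → ℕ → K) (x y : K) : K :=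
  ∑' ij : ℕ × ℕ, a ij.1 ij.2 * x ^ ij.1 * y ^ ij.2

/-- Evaluation of the one-variable power series with coefficients `c` at `x`. -/
noncomputable def evalPS1 {K : Type*} [NormedField K] (c : ℕ → K) (x : K) : K :=
  ∑' n : ℕ, c n * x ^ n

open PowerSeries Finset

theorem pow_dvd_pow_sub_pow_of_dvd {R : Type*} [CommRing R] {x f g : R} {n : ℕ}
    (hf : x ∣ f) (hg : x ∣ g) (h : x ^ n ∣ f - g) (j : ℕ) :
    x ^ (n + (j - 1)) ∣ f ^ j - g ^ j := by
  rw [← geom_sum₂_mul, pow_add, mul_comm (x ^ n)]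
  refine mul_dvd_mul (dvd_sum fun i hi => ?_) h
  rw [show x ^ (j - 1) = x ^ i * x ^ (j - 1 - i) by rw [← pow_add]; congr 1; grind]
  exact mul_dvd_mul (pow_dvd_pow_of_dvd hf i) (pow_dvd_pow_of_dvd hg _)

theorem IsUltrametricDist.norm_pow_sub_pow_le {R : Type*} [NormedCommRing R] [NormOneClass R]
    [IsUltrametricDist R] {x y : R} {r : ℝ} (hx : ‖x‖ ≤ r) (hy : ‖y‖ ≤ r) (j : ℕ) :
    ‖x ^ j - y ^ j‖ ≤ r ^ (j - 1) * ‖x - y‖ := by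
  have hr : 0 ≤ r := (norm_nonneg x).trans hx
  rw [← geom_sum₂_mul]
  refine norm_mul_le_of_le (norm_sum_le_of_forall_le_of_nonneg (by positivity) fun i hi => ?_)
    le_rfl
  calc ‖x ^ i * y ^ (j - 1 - i)‖ ≤ r ^ i * r ^ (j - 1 - i) :=
        norm_mul_le_of_le ((_root_.norm_pow_le x i).trans (pow_le_pow_left₀ (norm_nonneg x) hx i))
          ((_root_.norm_pow_le y _).trans (pow_le_pow_left₀ (norm_nonneg y) hy _))
    _ = r ^ (j - 1) := by rw [← pow_add]; congr 1; grind

namespace PowerSeries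

variable {R : Type*} [NormedRing R] [IsUltrametricDist R] {f g : R⟦X⟧} {M N ρ : ℝ}

theorem norm_coeff_mul_le (hρ : 0 ≤ ρ) (hf : ∀ n, ‖coeff n f‖ ≤ M * ρ ^ n)
    (hg : ∀ n, ‖coeff n g‖ ≤ N * ρ ^ n) (n : ℕ) : ‖coeff n (f * g)‖ ≤ M * N * ρ ^ n := by
  have hM : 0 ≤ M := by simpa using (norm_nonneg _).trans (hf 0)
  have hN : 0 ≤ N := by simpa using (norm_nonneg _).trans (hg 0)
  rw [coeff_mul]
  refine IsUltrametricDist.norm_sum_le_of_forall_le_of_nonneg (by positivity) fun kl hkl => ?_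
  rw [HasAntidiagonal.mem_antidiagonal] at hkl
  calc ‖coeff kl.1 f * coeff kl.2 g‖ ≤ (M * ρ ^ kl.1) * (N * ρ ^ kl.2) :=
        norm_mul_le_of_le (hf _) (hg _)
    _ = M * N * ρ ^ n := by rw [← hkl, pow_add]; ring

theorem norm_coeff_pow_le [NormOneClass R] (hρ : 0 ≤ ρ) (hf : ∀ n, ‖coeff n f‖ ≤ M * ρ ^ n)
    (j n : ℕ) : ‖coeff n (f ^ j)‖ ≤ M ^ j * ρ ^ n := by
  induction j generalizing n with
  | zero => rcases eq_or_ne n 0 with rfl | hn <;> simp [coeff_one, *]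
  | succ j ih => simpa only [pow_succ] using norm_coeff_mul_le hρ ih hf n

end PowerSeries

theorem summable_mul_pow_mul_pow {C q r : ℝ} (hq : 0 ≤ q) (hq1 : q < 1) (hr : 0 ≤ r) (hr1 : r < 1) :
    Summable fun p : ℕ × ℕ => C * q ^ p.1 * r ^ p.2 := by
  simpa only [mul_assoc] using ((summable_geometric_of_lt_one hq hq1).mul_of_nonneg
    (summable_geometric_of_lt_one hr hr1) (fun _ => by positivity)
    fun _ => by positivity).mul_left C

section Evaluation

variable {K : Type*} [NormedField K]

theorem summable_norm_mul_pow_of_le {c : ℕ → K} {M ρ : ℝ} {x : K} (hρ : 0 ≤ ρ)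
    (hc : ∀ n, ‖c n‖ ≤ M * ρ ^ n) (hx : ρ * ‖x‖ < 1) : Summable fun n => ‖c n * x ^ n‖ := by
  refine .of_nonneg_of_le (fun n => norm_nonneg _) (fun n => ?_)
    ((summable_geometric_of_lt_one (by positivity) hx).mul_left M)
  rw [norm_mul, norm_pow, mul_pow, ← mul_assoc]
  exact mul_le_mul_of_nonneg_right (hc n) (by positivity)

variable [CompleteSpace K]

theorem evalPS1_coeff_mul {f g : K⟦X⟧} {M N ρ : ℝ} {x : K} (hρ : 0 ≤ ρ)
    (hf : ∀ n, ‖coeff n f‖ ≤ M * ρ ^ n) (hg : ∀ n, ‖coeff n g‖ ≤ N * ρ ^ n)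
    (hx : ρ * ‖x‖ < 1) :
    evalPS1 (fun n => coeff n (f * g)) x =
      evalPS1 (fun n => coeff n f) x * evalPS1 (fun n => coeff n g) x := by
  have hf' := summable_norm_mul_pow_of_le hρ hf hx
  have hg' := summable_norm_mul_pow_of_le hρ hg hx
  unfold evalPS1
  rw [tsum_mul_tsum_eq_tsum_sum_antidiagonal_of_summable_norm hf' hg']
  refine tsum_congr fun n => ?_
  dsimp only
  rw [coeff_mul, sum_mul]
  refine sum_congr rfl fun kl hkl => ?_
  rw [← HasAntidiagonal.mem_antidiagonal.mp hkl, pow_add]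
  ring

theorem evalPS1_coeff_pow [IsUltrametricDist K] {f : K⟦X⟧} {M ρ : ℝ} {x : K} (hρ : 0 ≤ ρ)
    (hf : ∀ n, ‖coeff n f‖ ≤ M * ρ ^ n) (hx : ρ * ‖x‖ < 1) (j : ℕ) :
    evalPS1 (fun n => coeff n (f ^ j)) x = evalPS1 (fun n => coeff n f) x ^ j := by
  induction j with
  | zero =>
    rw [evalPS1, tsum_eq_single 0 fun n hn => by simp [coeff_one, hn]]
    simp
  | succ j ih =>
    rw [pow_succ, evalPS1_coeff_mul hρ (norm_coeff_pow_le hρ hf j) hf hx, ih, pow_succ]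

theorem evalPS2_eq_tsum_evalPS1_mul_pow {a : ℕ → ℕ → K} {x y : K}
    (h : Summable fun ij : ℕ × ℕ => a ij.1 ij.2 * x ^ ij.1 * y ^ ij.2) :
    evalPS2 a x y = ∑' j, evalPS1 (fun i => a i j) x * y ^ j := by
  rw [evalPS2, h.tsum_prod, ← Summable.tsum_comm (f := fun i j => a i j * x ^ i * y ^ j) h]
  exact tsum_congr fun j => tsum_mul_right

theorem summable_evalPS2_of_le {a : ℕ → ℕ → K} {x y : K} {C σ ρ : ℝ} (hσ : 0 ≤ σ) (hρ : 0 ≤ ρ)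
    (ha : ∀ i j, ‖a i j‖ ≤ C * σ ^ j * ρ ^ i) (hx : ρ * ‖x‖ < 1) (hy : σ * ‖y‖ < 1) :
    Summable fun ij : ℕ × ℕ => a ij.1 ij.2 * x ^ ij.1 * y ^ ij.2 := by
  refine .of_norm_bounded (summable_mul_pow_mul_pow (C := C) (by positivity) hx (by positivity) hy)
    fun ij => ?_
  rw [norm_mul, norm_mul, norm_pow, norm_pow]
  calc ‖a ij.1 ij.2‖ * ‖x‖ ^ ij.1 * ‖y‖ ^ ij.2
      ≤ C * σ ^ ij.2 * ρ ^ ij.1 * ‖x‖ ^ ij.1 * ‖y‖ ^ ij.2 := by gcongr; exact ha _ _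
    _ = C * (ρ * ‖x‖) ^ ij.1 * (σ * ‖y‖) ^ ij.2 := by ring

end Evaluation

section Formal

variable {R : Type*} [CommRing R]

/-- The coefficient of `X ^ n` in `F(X, g(X))` for `F = ∑ a i j X ^ i Y ^ j`, provided `g(0) = 0`:
then `X ^ j ∣ g ^ j`, so only `j ≤ n` contributes. -/
noncomputable def substCoeff (a : ℕ → ℕ → R) (g : R⟦X⟧) (n : ℕ) : R :=
  ∑ j ∈ range (n + 1), coeff n (PowerSeries.mk (fun i => a i j) * g ^ j)

/-- The coefficients of `F - b y`. -/
def eraseCoeff01 (a : ℕ → ℕ → R) (i j : ℕ) : R :=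
  if i = 0 ∧ j = 1 then 0 else a i j

theorem PowerSeries.coeff_mul_pow_eq_zero_of_lt {f g : R⟦X⟧} (hg : constantCoeff g = 0)
    {n j : ℕ} (h : n < j) : coeff n (f * g ^ j) = 0 :=
  X_pow_dvd_iff.mp ((pow_dvd_pow_of_dvd (X_dvd_iff.mpr hg) j).mul_left _) n h

theorem substCoeff_eq_eraseCoeff01_add {a : ℕ → ℕ → R} {g : R⟦X⟧} (hg : constantCoeff g = 0)
    (n : ℕ) : substCoeff a g n = substCoeff (eraseCoeff01 a) g n + a 0 1 * coeff n g := by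
  have hterm : ∀ j, coeff n (PowerSeries.mk (fun i => a i j) * g ^ j) =
      coeff n (PowerSeries.mk (fun i => eraseCoeff01 a i j) * g ^ j) +
        if j = 1 then a 0 1 * coeff n g else 0 := by
    intro j
    rcases eq_or_ne j 1 with rfl | hj
    · have : PowerSeries.mk (fun i => a i 1) =
          PowerSeries.mk (fun i => eraseCoeff01 a i 1) + C (a 0 1) := by
        ext i; rcases eq_or_ne i 0 with rfl | hi <;> simp [eraseCoeff01, coeff_C, *]
      rw [this, add_mul, map_add, pow_one, coeff_C_mul, if_pos rfl]
    · simp [eraseCoeff01, hj]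
  rw [substCoeff, substCoeff, sum_congr rfl fun j _ => hterm j, sum_add_distrib, sum_ite_eq']
  rcases eq_or_ne n 0 with rfl | hn
  · simp [hg]
  · rw [if_pos (by simp; omega)]

theorem substCoeff_trunc {a : ℕ → ℕ → R} (ha : a 0 1 = 0) {g : R⟦X⟧} (hg : constantCoeff g = 0)
    (n : ℕ) : substCoeff a (trunc n g) n = substCoeff a g n := by
  have hXg : X ∣ g := X_dvd_iff.mpr hg
  have hXt : X ∣ (trunc n g : R⟦X⟧) := by
    refine X_dvd_iff.mpr ?_
    rw [← coeff_zero_eq_constantCoeff_apply, Polynomial.coeff_coe, coeff_trunc]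
    split_ifs <;> simp [hg]
  have hXn : X ^ n ∣ (trunc n g : R⟦X⟧) - g := by
    refine X_pow_dvd_iff.mpr fun m hm => ?_
    rw [map_sub, Polynomial.coeff_coe, coeff_trunc, if_pos hm, sub_self]
  refine sum_congr rfl fun j _ => ?_
  rw [← sub_eq_zero, ← map_sub, ← mul_sub]
  refine X_pow_dvd_iff.mp ?_ n (Nat.lt_succ_self n)
  rcases lt_trichotomy j 1 with hj | rfl | hj
  · simp [Nat.lt_one_iff.mp hj]
  · have hXa : X ∣ PowerSeries.mk fun i => a i 1 := X_dvd_iff.mpr (by simpa using ha)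
    rw [pow_succ', pow_one, pow_one]
    exact mul_dvd_mul hXa hXn
  · exact (pow_dvd_pow X (show n + 1 ≤ n + (j - 1) by omega)).trans
      ((pow_dvd_pow_sub_pow_of_dvd hXt hXg hXn j).mul_left _)

end Formal

section FormalSolution

variable {K : Type*} [Field K]

/-- The coefficients of the formal solution `g` of `F(X, g(X)) = 0`: by `substCoeff_trunc`, the
equation at `X ^ n` is linear in `coeff n g`, with the lower coefficients entering only through
`trunc n g`. -/
noncomputable def implicitCoeff (a : ℕ → ℕ → K) (n : ℕ) : K :=
  -(a 0 1)⁻¹ * substCoeff (eraseCoeff01 a)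
    (PowerSeries.mk fun k => if _ : k < n then implicitCoeff a k else 0) n

theorem implicitCoeff_eq (a : ℕ → ℕ → K) (n : ℕ) :
    implicitCoeff a n =
      -(a 0 1)⁻¹ * substCoeff (eraseCoeff01 a) (trunc n (PowerSeries.mk (implicitCoeff a))) n := by
  rw [implicitCoeff]
  congr 2
  ext k
  simp [Polynomial.coeff_coe, coeff_trunc]

theorem implicitCoeff_zero {a : ℕ → ℕ → K} (h00 : a 0 0 = 0) : implicitCoeff a 0 = 0 := by
  simp [implicitCoeff_eq, substCoeff, eraseCoeff01, h00]

theorem substCoeff_implicitCoeff {a : ℕ → ℕ → K} (h00 : a 0 0 = 0) (hb : a 0 1 ≠ 0) (n : ℕ) :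
    substCoeff a (PowerSeries.mk (implicitCoeff a)) n = 0 := by
  have hc0 : constantCoeff (PowerSeries.mk (implicitCoeff a)) = 0 := by
    simpa [← coeff_zero_eq_constantCoeff_apply] using implicitCoeff_zero h00
  rw [substCoeff_eq_eraseCoeff01_add hc0, ← substCoeff_trunc (by simp [eraseCoeff01]) hc0,
    coeff_mk, implicitCoeff_eq]
  rw [← mul_assoc, mul_neg, mul_inv_cancel₀ hb, neg_one_mul, add_neg_cancel]

end FormalSolution

theorem norm_implicitCoeff_le {K : Type*} [NormedField K] [IsUltrametricDist K]
    {a : ℕ → ℕ → K} {μ ρ : ℝ} (hμ : 0 < μ) (hρ : 0 ≤ ρ)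
    (ha : ∀ i j, ¬(i = 0 ∧ j = 1) → ‖a i j‖ * μ ^ j ≤ ‖a 0 1‖ * μ * ρ ^ i) (n : ℕ) :
    ‖implicitCoeff a n‖ ≤ μ * ρ ^ n := by
  induction n using Nat.strong_induction_on with
  | _ n ih =>
  set t : K⟦X⟧ := (trunc n (PowerSeries.mk (implicitCoeff a)) : K⟦X⟧)
  have ht : ∀ k, ‖coeff k t‖ ≤ μ * ρ ^ k := by
    intro k
    rw [Polynomial.coeff_coe, coeff_trunc]
    split_ifs with hk
    · simpa using ih k hk
    · simp only [norm_zero]; positivity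
  have hA : ∀ j i, ‖coeff i (PowerSeries.mk fun i => eraseCoeff01 a i j)‖ ≤
      ‖a 0 1‖ * μ / μ ^ j * ρ ^ i := by
    intro j i
    rw [coeff_mk, eraseCoeff01]
    split_ifs with h
    · simp only [norm_zero]; positivity
    · rw [div_mul_eq_mul_div, le_div_iff₀ (by positivity)]
      exact ha i j h
  have hS : ‖substCoeff (eraseCoeff01 a) t n‖ ≤ ‖a 0 1‖ * μ * ρ ^ n := by
    refine IsUltrametricDist.norm_sum_le_of_forall_le_of_nonneg (by positivity) fun j _ => ?_
    calc _ ≤ ‖a 0 1‖ * μ / μ ^ j * μ ^ j * ρ ^ n :=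
          norm_coeff_mul_le hρ (hA j) (norm_coeff_pow_le hρ ht j) n
      _ = ‖a 0 1‖ * μ * ρ ^ n := by field_simp
  rw [implicitCoeff_eq, norm_mul, norm_neg, norm_inv]
  rcases eq_or_ne ‖a 0 1‖ 0 with hb | hb
  · rw [hb, inv_zero, zero_mul]; positivity
  · calc ‖a 0 1‖⁻¹ * ‖substCoeff (eraseCoeff01 a) t n‖ ≤ ‖a 0 1‖⁻¹ * (‖a 0 1‖ * μ * ρ ^ n) := by
          gcongr
      _ = μ * ρ ^ n := by field_simp

section Composition

variable {K : Type*} [NormedField K] [CompleteSpace K] [IsUltrametricDist K]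

theorem evalPS2_evalPS1_eq_tsum_substCoeff {a : ℕ → ℕ → K} {g : K⟦X⟧} {x : K} {C σ μ ρ : ℝ}
    (hσ : 0 ≤ σ) (hρ : 0 ≤ ρ) (hg0 : constantCoeff g = 0) (ha : ∀ i j, ‖a i j‖ ≤ C * σ ^ j * ρ ^ i)
    (hg : ∀ n, ‖coeff n g‖ ≤ μ * ρ ^ n) (hσμ : σ * μ < 1) (hx : ρ * ‖x‖ < 1) :
    evalPS2 a x (evalPS1 (fun n => coeff n g) x) = ∑' n, substCoeff a g n * x ^ n := by
  have hμ : 0 ≤ μ := by simpa using (norm_nonneg _).trans (hg 0)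
  have hA : ∀ j i, ‖coeff i (PowerSeries.mk fun i => a i j)‖ ≤ C * σ ^ j * ρ ^ i := by
    simpa using fun j i => ha i j
  have hy : ‖evalPS1 (fun n => coeff n g) x‖ ≤ μ := by
    refine IsUltrametricDist.norm_tsum_le_of_forall_le_of_nonneg hμ fun n => ?_
    calc ‖coeff n g * x ^ n‖ ≤ μ * ρ ^ n * ‖x‖ ^ n := by
          rw [norm_mul, norm_pow]; gcongr; exact hg n
      _ = μ * (ρ * ‖x‖) ^ n := by ring
      _ ≤ μ := mul_le_of_le_one_right hμ (pow_le_one₀ (by positivity) hx.le)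
  have hrow : ∀ j, evalPS1 (fun i => a i j) x * evalPS1 (fun n => coeff n g) x ^ j =
      ∑' n, coeff n (PowerSeries.mk (fun i => a i j) * g ^ j) * x ^ n := by
    intro j
    rw [← evalPS1_coeff_pow hρ hg hx, ← evalPS1, evalPS1_coeff_mul hρ (hA j)
      (norm_coeff_pow_le hρ hg j) hx]
    simp only [coeff_mk]
  have hsum : Summable fun jn : ℕ × ℕ =>
      coeff jn.2 (PowerSeries.mk (fun i => a i jn.1) * g ^ jn.1) * x ^ jn.2 := by
    refine .of_norm_bounded
      (summable_mul_pow_mul_pow (C := C) (by positivity) hσμ (by positivity) hx) fun jn => ?_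
    calc _ ≤ C * σ ^ jn.1 * μ ^ jn.1 * ρ ^ jn.2 * ‖x‖ ^ jn.2 := by
          rw [norm_mul, norm_pow]
          gcongr
          exact norm_coeff_mul_le hρ (hA jn.1) (norm_coeff_pow_le hρ hg jn.1) jn.2
      _ = C * (σ * μ) ^ jn.1 * (ρ * ‖x‖) ^ jn.2 := by ring
  rw [evalPS2_eq_tsum_evalPS1_mul_pow (summable_evalPS2_of_le hσ hρ ha hx
    ((mul_le_mul_of_nonneg_left hy hσ).trans_lt hσμ)), tsum_congr hrow,
    ← Summable.tsum_comm (f := fun j n => coeff n (PowerSeries.mk (fun i => a i j) * g ^ j) * x ^ n)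
    hsum]
  refine tsum_congr fun n => ?_
  rw [tsum_eq_sum (s := range (n + 1)) fun j hj => by
    rw [coeff_mul_pow_eq_zero_of_lt hg0 (by simpa using hj), zero_mul], substCoeff, sum_mul]

end Composition

theorem eq_of_evalPS2_eq {K : Type*} [NormedField K] [IsUltrametricDist K] {a : ℕ → ℕ → K}
    {x y₁ y₂ : K} {s r κ : ℝ}
    (h₁ : Summable fun ij : ℕ × ℕ => a ij.1 ij.2 * x ^ ij.1 * y₁ ^ ij.2)
    (h₂ : Summable fun ij : ℕ × ℕ => a ij.1 ij.2 * x ^ ij.1 * y₂ ^ ij.2)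
    (hx : ‖x‖ ≤ s) (hy₁ : ‖y₁‖ ≤ r) (hy₂ : ‖y₂‖ ≤ r) (hκ : κ < ‖a 0 1‖)
    (ha : ∀ i j, 0 < j → ¬(i = 0 ∧ j = 1) → ‖a i j‖ * s ^ i * r ^ (j - 1) ≤ κ)
    (h : evalPS2 a x y₁ = evalPS2 a x y₂) : y₁ = y₂ := by
  set f : ℕ × ℕ → K := fun ij => a ij.1 ij.2 * x ^ ij.1 * (y₁ ^ ij.2 - y₂ ^ ij.2)
  have hf : HasSum f 0 := by
    have hsub := h₁.hasSum.sub h₂.hasSum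
    rw [show (∑' ij : ℕ × ℕ, a ij.1 ij.2 * x ^ ij.1 * y₁ ^ ij.2) -
      ∑' ij : ℕ × ℕ, a ij.1 ij.2 * x ^ ij.1 * y₂ ^ ij.2 = 0 from sub_eq_zero.mpr h] at hsub
    exact hsub.congr_fun fun ij => by simp only [f]; ring
  have hs : 0 ≤ s := (norm_nonneg x).trans hx
  have hκ0 : 0 ≤ κ := by
    have := ha 1 1 one_pos (by simp)
    simp only [pow_one, Nat.sub_self, pow_zero, mul_one] at this
    exact (mul_nonneg (norm_nonneg _) hs).trans this
  have hrest : ‖∑' ij, if ij = (0, 1) then 0 else f ij‖ ≤ κ * ‖y₁ - y₂‖ := by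
    refine IsUltrametricDist.norm_tsum_le_of_forall_le_of_nonneg (by positivity) fun ⟨i, j⟩ => ?_
    split_ifs with hij
    · simp only [norm_zero]; positivity
    rcases Nat.eq_zero_or_pos j with rfl | hj
    · simp only [f, pow_zero, sub_self, mul_zero, norm_zero]; positivity
    calc ‖f (i, j)‖ ≤ ‖a i j‖ * s ^ i * (r ^ (j - 1) * ‖y₁ - y₂‖) := by
          simp only [f, norm_mul, norm_pow]
          exact mul_le_mul (by gcongr) (IsUltrametricDist.norm_pow_sub_pow_le hy₁ hy₂ j)
            (norm_nonneg _) (by positivity)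
      _ ≤ κ * ‖y₁ - y₂‖ := by
          rw [← mul_assoc]
          gcongr
          exact ha i j hj (by simpa [Prod.ext_iff] using hij)
  have hlin : a 0 1 * (y₁ - y₂) = -∑' ij, if ij = (0, 1) then 0 else f ij := by
    have := hf.summable.tsum_eq_add_tsum_ite (0, 1)
    rw [hf.tsum_eq] at this
    simp only [f, pow_zero, pow_one, mul_one] at this
    linear_combination -this
  by_contra hne
  have hΔ : 0 < ‖y₁ - y₂‖ := norm_pos_iff.mpr (sub_ne_zero.mpr hne)
  have : ‖a 0 1‖ * ‖y₁ - y₂‖ ≤ κ * ‖y₁ - y₂‖ := by rwa [← norm_mul, hlin, norm_neg]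
  exact hκ.not_ge (le_of_mul_le_mul_right this hΔ)

section Estimates

variable {A C δ θ : ℝ} {i j : ℕ}

theorem le_mul_inv_pow_mul_inv_pow (hA0 : 0 ≤ A) (hδ : 0 < δ) (hθ : 0 < θ) (hθ1 : θ ≤ 1)
    (hA : A * δ ^ (i + j) ≤ C) : A ≤ C * δ⁻¹ ^ j * (θ ^ 2 * δ)⁻¹ ^ i := by
  have hC : 0 ≤ C := (mul_nonneg hA0 (by positivity)).trans hA
  have hθδ : θ ^ 2 * δ ≤ δ := mul_le_of_le_one_left hδ.le (pow_le_one₀ hθ.le hθ1)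
  calc A ≤ C * δ⁻¹ ^ (i + j) := by
        rwa [inv_pow, ← div_eq_mul_inv, le_div_iff₀ (by positivity)]
    _ = C * δ⁻¹ ^ j * δ⁻¹ ^ i := by ring
    _ ≤ C * δ⁻¹ ^ j * (θ ^ 2 * δ)⁻¹ ^ i := by gcongr

theorem mul_pow_le_of_two_le (hA0 : 0 ≤ A) (hδ : 0 < δ) (hθ : 0 < θ) (hθ1 : θ ≤ 1)
    (hA : A * δ ^ (i + j) ≤ C) (hij : 2 ≤ 2 * i + j) :
    A * (θ * δ) ^ j ≤ C * θ ^ 2 * (θ ^ 2 * δ)⁻¹ ^ i := by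
  rw [inv_pow, ← div_eq_mul_inv, le_div_iff₀ (by positivity)]
  calc A * (θ * δ) ^ j * (θ ^ 2 * δ) ^ i = A * δ ^ (i + j) * θ ^ (2 * i + j) := by ring
    _ ≤ C * θ ^ 2 := mul_le_mul hA (pow_le_pow_of_le_one hθ.le hθ1 hij) (by positivity)
        ((mul_nonneg hA0 (by positivity)).trans hA)

theorem mul_pow_mul_pow_le (hA0 : 0 ≤ A) (hδ : 0 < δ) (hθ : 0 < θ) (hθ1 : θ ≤ 1)
    (hA : A * δ ^ (i + j) ≤ C) (hj : 0 < j) (hij : 2 ≤ i + j) :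
    A * (θ ^ 2 * δ / 2) ^ i * (θ * δ / 2) ^ (j - 1) ≤ C * θ / (2 * δ) := by
  obtain ⟨k, rfl⟩ : ∃ k, j = k + 1 := ⟨j - 1, by omega⟩
  have hθ2 : θ ^ 2 ≤ θ := by nlinarith
  calc A * (θ ^ 2 * δ / 2) ^ i * (θ * δ / 2) ^ (k + 1 - 1)
      ≤ A * (θ * δ / 2) ^ i * (θ * δ / 2) ^ k := by rw [Nat.add_sub_cancel]; gcongr
    _ = A * δ ^ (i + (k + 1)) * (θ / 2) ^ (i + k) / δ := by field_simp; ring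
    _ ≤ C * (θ / 2) / δ := by
        have hC : 0 ≤ C := (mul_nonneg hA0 (by positivity)).trans hA
        gcongr
        exact pow_le_of_le_one (M₀ := ℝ) (by positivity) (by linarith) (by omega)
    _ = C * θ / (2 * δ) := by ring

end Estimates

/-- `θ = ‖b‖ δ / C` measures how strongly the linear term `b y` dominates `F` on the polydisk of
radius `δ`; the implicit function will live on `‖x‖ ≤ θ ^ 2 δ / 2`, with values in
`‖y‖ ≤ θ δ / 2`. -/
structure IsAdmissibleScale {K : Type*} [NormedField K] (a : ℕ → ℕ → K) (δ C θ : ℝ) : Prop where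
  delta_pos : 0 < δ
  theta_pos : 0 < θ
  theta_le : θ ≤ 1 / 2
  mul_theta : C * θ = ‖a 0 1‖ * δ
  norm_mul_pow_le : ∀ i j, ‖a i j‖ * δ ^ (i + j) ≤ C

theorem exists_isAdmissibleScale {K : Type*} [NormedField K] {a : ℕ → ℕ → K} {δ : ℝ}
    (hδ : 0 < δ) (hb : a 0 1 ≠ 0)
    (hconv : Filter.Tendsto (fun ij : ℕ × ℕ => ‖a ij.1 ij.2‖ * δ ^ (ij.1 + ij.2))
      Filter.cofinite (nhds 0)) :
    ∃ C θ, IsAdmissibleScale a δ C θ := by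
  obtain ⟨C₀, hC₀⟩ := hconv.bddAbove_range_of_cofinite
  have hβ : 0 < ‖a 0 1‖ := norm_pos_iff.mpr hb
  set C := max C₀ (2 * ‖a 0 1‖ * δ)
  have hC : 2 * ‖a 0 1‖ * δ ≤ C := le_max_right _ _
  have hC0 : 0 < C := by positivity
  refine ⟨C, ‖a 0 1‖ * δ / C, ⟨hδ, by positivity, ?_, by field_simp, fun i j =>
    (hC₀ ⟨(i, j), rfl⟩).trans (le_max_left _ _)⟩⟩
  rw [div_le_iff₀ hC0]
  linarith

namespace IsAdmissibleScale

variable {K : Type*} [NormedField K] {a : ℕ → ℕ → K} {δ C θ : ℝ}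

theorem inv_mul_le_half (h : IsAdmissibleScale a δ C θ) {s : ℝ} (hs : s ≤ θ ^ 2 * δ / 2) :
    (θ ^ 2 * δ)⁻¹ * s ≤ 1 / 2 := by
  have := h.delta_pos; have := h.theta_pos
  rw [inv_mul_le_iff₀ (by positivity)]
  linarith

theorem norm_le (h : IsAdmissibleScale a δ C θ) (i j : ℕ) :
    ‖a i j‖ ≤ C * δ⁻¹ ^ j * (θ ^ 2 * δ)⁻¹ ^ i :=
  le_mul_inv_pow_mul_inv_pow (norm_nonneg _) h.delta_pos h.theta_pos (by linarith [h.theta_le])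
    (h.norm_mul_pow_le i j)

variable [IsUltrametricDist K]

theorem norm_implicitCoeff_le (h : IsAdmissibleScale a δ C θ) (h00 : a 0 0 = 0) (n : ℕ) :
    ‖implicitCoeff a n‖ ≤ θ * δ * (θ ^ 2 * δ)⁻¹ ^ n := by
  have := h.delta_pos; have := h.theta_pos
  refine _root_.norm_implicitCoeff_le (μ := θ * δ) (by positivity) (by positivity)
    (fun i j hij => ?_) n
  by_cases h0 : i = 0 ∧ j = 0
  · obtain ⟨rfl, rfl⟩ := h0
    simp only [h00, norm_zero, zero_mul]
    positivity
  calc ‖a i j‖ * (θ * δ) ^ j ≤ C * θ ^ 2 * (θ ^ 2 * δ)⁻¹ ^ i :=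
        mul_pow_le_of_two_le (norm_nonneg _) h.delta_pos h.theta_pos (by linarith [h.theta_le])
          (h.norm_mul_pow_le i j) (by omega)
    _ = ‖a 0 1‖ * (θ * δ) * (θ ^ 2 * δ)⁻¹ ^ i := by
        rw [sq, ← mul_assoc, h.mul_theta]; ring

theorem norm_implicitCoeff_mul_pow_le (h : IsAdmissibleScale a δ C θ) (h00 : a 0 0 = 0) {s : ℝ}
    (hs0 : 0 ≤ s) (hs : s ≤ θ ^ 2 * δ / 2) (n : ℕ) :
    ‖implicitCoeff a n‖ * s ^ n ≤ θ * δ * (1 / 2) ^ n := by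
  have := h.delta_pos; have := h.theta_pos
  calc ‖implicitCoeff a n‖ * s ^ n ≤ θ * δ * (θ ^ 2 * δ)⁻¹ ^ n * s ^ n := by
        gcongr; exact h.norm_implicitCoeff_le h00 n
    _ = θ * δ * ((θ ^ 2 * δ)⁻¹ * s) ^ n := by ring
    _ ≤ θ * δ * (1 / 2) ^ n := by
        gcongr
        exact h.inv_mul_le_half hs

theorem norm_evalPS1_implicitCoeff_le (h : IsAdmissibleScale a δ C θ) (h00 : a 0 0 = 0) {x : K}
    (hx : ‖x‖ ≤ θ ^ 2 * δ / 2) : ‖evalPS1 (implicitCoeff a) x‖ ≤ θ * δ / 2 := by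
  have := h.delta_pos; have := h.theta_pos
  refine IsUltrametricDist.norm_tsum_le_of_forall_le_of_nonneg (by positivity) fun n => ?_
  rcases Nat.eq_zero_or_pos n with rfl | hn
  · simp only [implicitCoeff_zero h00, zero_mul, norm_zero]; positivity
  calc ‖implicitCoeff a n * x ^ n‖ ≤ θ * δ * (1 / 2) ^ n := by
        rw [norm_mul, norm_pow]
        exact h.norm_implicitCoeff_mul_pow_le h00 (norm_nonneg x) hx n
    _ ≤ θ * δ * (1 / 2) ^ 1 :=
        mul_le_mul_of_nonneg_left (pow_le_pow_of_le_one (by norm_num) (by norm_num) hn)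
          (by positivity)
    _ = θ * δ / 2 := by ring

variable [CompleteSpace K]

theorem evalPS2_evalPS1_implicitCoeff (h : IsAdmissibleScale a δ C θ) (h00 : a 0 0 = 0)
    (hb : a 0 1 ≠ 0) {x : K} (hx : ‖x‖ ≤ θ ^ 2 * δ / 2) :
    evalPS2 a x (evalPS1 (implicitCoeff a) x) = 0 := by
  have := h.delta_pos; have := h.theta_pos
  have hcomp := evalPS2_evalPS1_eq_tsum_substCoeff (g := PowerSeries.mk (implicitCoeff a))
    (by positivity) (by positivity) (by simpa using implicitCoeff_zero h00) h.norm_le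
    (by simpa using h.norm_implicitCoeff_le h00)
    (by rw [mul_comm θ, inv_mul_cancel_left₀ h.delta_pos.ne']; linarith [h.theta_le])
    ((h.inv_mul_le_half hx).trans_lt (by norm_num))
  simp only [coeff_mk] at hcomp
  simp [hcomp, substCoeff_implicitCoeff h00 hb]

theorem eq_of_evalPS2_eq (h : IsAdmissibleScale a δ C θ) (hb : a 0 1 ≠ 0) {x y₁ y₂ : K}
    (hx : ‖x‖ ≤ θ ^ 2 * δ / 2) (hy₁ : ‖y₁‖ ≤ θ * δ / 2) (hy₂ : ‖y₂‖ ≤ θ * δ / 2)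
    (heq : evalPS2 a x y₁ = evalPS2 a x y₂) : y₁ = y₂ := by
  have := h.delta_pos; have := h.theta_pos
  have hsum : ∀ y : K, ‖y‖ ≤ θ * δ / 2 →
      Summable fun ij : ℕ × ℕ => a ij.1 ij.2 * x ^ ij.1 * y ^ ij.2 := fun y hy =>
    summable_evalPS2_of_le (by positivity) (by positivity) h.norm_le
      ((h.inv_mul_le_half hx).trans_lt (by norm_num)) (by
        rw [inv_mul_lt_iff₀ h.delta_pos]
        nlinarith [h.theta_le])
  refine _root_.eq_of_evalPS2_eq (hsum y₁ hy₁) (hsum y₂ hy₂) hx hy₁ hy₂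
    (half_lt_self (norm_pos_iff.mpr hb)) (fun i j hj hij => ?_) heq
  calc ‖a i j‖ * (θ ^ 2 * δ / 2) ^ i * (θ * δ / 2) ^ (j - 1) ≤ C * θ / (2 * δ) :=
        mul_pow_mul_pow_le (norm_nonneg _) h.delta_pos h.theta_pos (by linarith [h.theta_le])
          (h.norm_mul_pow_le i j) hj (by omega)
    _ = ‖a 0 1‖ / 2 := by rw [h.mul_theta]; field_simp

end IsAdmissibleScale

theorem nonarch_implicit_function_theorem_general
    (ℂp : Type*) [NormedField ℂp] [CompleteSpace ℂp]
    [IsUltrametricDist ℂp]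
    (a : ℕ → ℕ → ℂp) (δ : ℝ) (hδ : 0 < δ)
    (hconv : Filter.Tendsto (fun ij : ℕ × ℕ => ‖a ij.1 ij.2‖ * δ ^ (ij.1 + ij.2))
      Filter.cofinite (nhds 0))
    (h00 : a 0 0 = 0) (hb : a 0 1 ≠ 0) :
    ∃ δ' : ℝ, 0 < δ' ∧ δ' ≤ δ ∧ ∃ c : ℕ → ℂp,
      Filter.Tendsto (fun n : ℕ => ‖c n‖ * δ' ^ n) Filter.atTop (nhds 0) ∧
      c 0 = 0 ∧
      ∀ x y : ℂp, ‖x‖ ≤ δ' → ‖y‖ ≤ δ' →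
        (evalPS2 a x y = 0 ↔ y = evalPS1 c x) := by
  obtain ⟨C, θ, h⟩ := exists_isAdmissibleScale hδ hb hconv
  have hθ := h.theta_pos
  have hθ2 := h.theta_le
  have hsr : θ ^ 2 * δ / 2 ≤ θ * δ / 2 := by gcongr; nlinarith
  have hroot := fun x (hx : ‖x‖ ≤ θ ^ 2 * δ / 2) => h.evalPS2_evalPS1_implicitCoeff h00 hb hx
  refine ⟨θ ^ 2 * δ / 2, by positivity, hsr.trans (by nlinarith), implicitCoeff a, ?_,
    implicitCoeff_zero h00, fun x y hx hy => ⟨fun hy0 => ?_, fun hyc => hyc ▸ hroot x hx⟩⟩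
  · refine squeeze_zero (fun n => by positivity)
      (h.norm_implicitCoeff_mul_pow_le h00 (by positivity) le_rfl) ?_
    simpa using (tendsto_pow_atTop_nhds_zero_of_lt_one (by norm_num : (0 : ℝ) ≤ 1 / 2)
      (by norm_num)).const_mul (θ * δ)
  · exact h.eq_of_evalPS2_eq hb hx (hy.trans hsr)
      (h.norm_evalPS1_implicitCoeff_le h00 hx) (hy0.trans (hroot x hx).symm)

/-- non-archimedean implicit function theorem: if
`F(x,y) = Σ a_{ij} x^i y^j` converges on the closed polydisk of radius `δ`,
`F(0,0) = 0` and the coefficient `b = a₀₁` of `y` is nonzero, then there are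
`0 < δ' ≤ δ` and a power series `g` convergent on `|x| ≤ δ'` with `g(0) = 0`
such that for `|x|, |y| ≤ δ'` one has `F(x,y) = 0 ↔ y = g(x)`. -/
theorem nonarch_implicit_function_theorem
    {p : ℕ} [Fact p.Prime] (ℂp : Type*) [NormedField ℂp] [CompleteSpace ℂp]
    [IsAlgClosed ℂp] [IsUltrametricDist ℂp] [Algebra ℚ_[p] ℂp]
    (hnorm : ∀ a : ℚ_[p], ‖algebraMap ℚ_[p] ℂp a‖ = ‖a‖)
    (hdense : Dense {x : ℂp | IsAlgebraic ℚ_[p] x})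
    (a : ℕ → ℕ → ℂp) (δ : ℝ) (hδ : 0 < δ)
    (hconv : Filter.Tendsto (fun ij : ℕ × ℕ => ‖a ij.1 ij.2‖ * δ ^ (ij.1 + ij.2))
      Filter.cofinite (nhds 0))
    (h00 : a 0 0 = 0) (hb : a 0 1 ≠ 0) :
    ∃ δ' : ℝ, 0 < δ' ∧ δ' ≤ δ ∧ ∃ c : ℕ → ℂp,
      Filter.Tendsto (fun n : ℕ => ‖c n‖ * δ' ^ n) Filter.atTop (nhds 0) ∧
      c 0 = 0 ∧
      ∀ x y : ℂp, ‖x‖ ≤ δ' → ‖y‖ ≤ δ' →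
        (evalPS2 a x y = 0 ↔ y = evalPS1 c x) :=
  nonarch_implicit_function_theorem_general ℂp a δ hδ hconv h00 hb
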